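/- For every real ν > 0 and every smooth function f : ℂ → ℂ, one has at every point z ∈ ℂ: Δ_ν f = (1+|z|²)^{−ν} · ( Δ̃_ν + ν )( (1+|z|²)^ν f ), where Δ_ν f = −(1+|z|²)²·∂²f/∂z∂z̄ − ν(1+|z|²)·( z·∂f/∂z − z̄·∂f/∂z̄ ) + ν²|z|²·f and Δ̃_ν g = −(1+|z|²)²·∂²g/∂z∂z̄ + 2ν(1+|z|²)·z̄·∂g/∂z̄. -/

import Mathlib

open Complex

/-- Wirtinger derivative `∂f/∂z = (1/2)(∂f/∂x - i ∂f/∂y)`. -/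
noncomputable def wirtZ (f : ℂ → ℂ) (z : ℂ) : ℂ :=
  (1 / 2) * (fderiv ℝ f z 1 - Complex.I * fderiv ℝ f z Complex.I)

/-- Conjugate Wirtinger derivative `∂f/∂z̄ = (1/2)(∂f/∂x + i ∂f/∂y)`. -/
noncomputable def wirtZbar (f : ℂ → ℂ) (z : ℂ) : ℂ :=
  (1 / 2) * (fderiv ℝ f z 1 + Complex.I * fderiv ℝ f z Complex.I)

/-- The magnetic Laplacian `Δ_ν`. -/
noncomputable def magLap (ν : ℝ) (f : ℂ → ℂ) (z : ℂ) : ℂ :=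
  -(1 + (Complex.normSq z : ℂ)) ^ 2 * wirtZ (fun w => wirtZbar f w) z
    - (ν : ℂ) * (1 + (Complex.normSq z : ℂ)) *
        (z * wirtZ f z - (starRingEnd ℂ) z * wirtZbar f z)
    + (ν : ℂ) ^ 2 * (Complex.normSq z : ℂ) * f z

/-- The Laplacian `Δ̃_ν` of Peetre--Zhang. -/
noncomputable def magLapTilde (ν : ℝ) (g : ℂ → ℂ) (z : ℂ) : ℂ :=
  -(1 + (Complex.normSq z : ℂ)) ^ 2 * wirtZ (fun w => wirtZbar g w) z
    + 2 * (ν : ℂ) * (1 + (Complex.normSq z : ℂ)) * (starRingEnd ℂ) z * wirtZbar g z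

/-- `P ν w = ((1+|w|²)^ν : ℝ) : ℂ` -/
noncomputable def P (ν : ℝ) (w : ℂ) : ℂ := (((1 + Complex.normSq w) ^ ν : ℝ) : ℂ)

lemma hasFDerivAt_normSq' (z : ℂ) :
    HasFDerivAt (fun w : ℂ => 1 + Complex.normSq w)
      ((2*z.re) • Complex.reCLM + (2*z.im) • Complex.imCLM) z := by
  have h : HasFDerivAt (fun w : ℂ => 1 + (w.re * w.re + w.im * w.im))
      ((z.re • Complex.reCLM + z.re • Complex.reCLM) +
       (z.im • Complex.imCLM + z.im • Complex.imCLM)) z :=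
    (((Complex.reCLM.hasFDerivAt).mul (Complex.reCLM.hasFDerivAt)).add
      ((Complex.imCLM.hasFDerivAt).mul (Complex.imCLM.hasFDerivAt))).const_add 1
  convert h using 1
  case e'_11 => funext w; rw [Complex.normSq_apply]
  module

lemma one_add_normSq_pos (w : ℂ) : 0 < 1 + Complex.normSq w := by have := Complex.normSq_nonneg w; linarith

lemma hasFDerivAt_P (ν : ℝ) (z : ℂ) :
    HasFDerivAt (P ν)
      (Complex.ofRealCLM.comp ((ν * (1 + Complex.normSq z) ^ (ν - 1)) •
        ((2*z.re) • Complex.reCLM + (2*z.im) • Complex.imCLM))) z := by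
  have h1 : HasDerivAt (fun r : ℝ => r ^ ν) (ν * (1 + Complex.normSq z) ^ (ν - 1))
      (1 + Complex.normSq z) := by
    have := Real.hasStrictDerivAt_rpow_const_of_ne (ne_of_gt (one_add_normSq_pos z)) ν
    exact this.hasDerivAt
  have h2 := (h1.comp_hasFDerivAt z (hasFDerivAt_normSq' z))
  exact Complex.ofRealCLM.hasFDerivAt.comp z h2

lemma differentiableAt_P (ν : ℝ) (z : ℂ) : DifferentiableAt ℝ (P ν) z :=
  (hasFDerivAt_P ν z).differentiableAt

lemma wirtZ_P (ν : ℝ) (z : ℂ) :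
    wirtZ (P ν) z = ((ν * (1 + Complex.normSq z) ^ (ν - 1) : ℝ) : ℂ) * (starRingEnd ℂ) z := by
  have h := (hasFDerivAt_P ν z).fderiv
  unfold wirtZ
  rw [h]
  simp [Complex.ext_iff]
  ring_nf
  exact ⟨trivial, trivial⟩

lemma wirtZbar_P (ν : ℝ) (z : ℂ) :
    wirtZbar (P ν) z = ((ν * (1 + Complex.normSq z) ^ (ν - 1) : ℝ) : ℂ) * z := by
  have h := (hasFDerivAt_P ν z).fderiv
  unfold wirtZbar
  rw [h]
  simp [Complex.ext_iff]
  ring_nf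
  exact ⟨trivial, trivial⟩

lemma wirtZ_mul (f g : ℂ → ℂ) (z : ℂ) (hf : DifferentiableAt ℝ f z)
    (hg : DifferentiableAt ℝ g z) :
    wirtZ (fun w => f w * g w) z = wirtZ f z * g z + f z * wirtZ g z := by
  unfold wirtZ
  rw [fderiv_fun_mul hf hg]
  simp [smul_eq_mul]
  ring

lemma wirtZbar_mul (f g : ℂ → ℂ) (z : ℂ) (hf : DifferentiableAt ℝ f z)
    (hg : DifferentiableAt ℝ g z) :
    wirtZbar (fun w => f w * g w) z = wirtZbar f z * g z + f z * wirtZbar g z := by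
  unfold wirtZbar
  rw [fderiv_fun_mul hf hg]
  simp [smul_eq_mul]
  ring

lemma wirtZ_add (f g : ℂ → ℂ) (z : ℂ) (hf : DifferentiableAt ℝ f z)
    (hg : DifferentiableAt ℝ g z) :
    wirtZ (fun w => f w + g w) z = wirtZ f z + wirtZ g z := by
  unfold wirtZ
  rw [fderiv_fun_add hf hg]
  simp
  ring

lemma wirtZ_const_mul (c : ℂ) (f : ℂ → ℂ) (z : ℂ) (hf : DifferentiableAt ℝ f z) :
    wirtZ (fun w => c * f w) z = c * wirtZ f z := by
  unfold wirtZ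
  rw [fderiv_const_mul hf]
  simp
  ring

lemma wirtZ_id (z : ℂ) : wirtZ (fun w => w) z = 1 := by
  unfold wirtZ
  rw [fderiv_id']
  simp [Complex.ext_iff]
  norm_num

lemma wirtZbar_id (z : ℂ) : wirtZbar (fun w => w) z = 0 := by
  unfold wirtZbar
  rw [fderiv_id']
  simp [Complex.ext_iff]

theorem main (ν : ℝ) (hν : 0 < ν) (f : ℂ → ℂ) (hf : ContDiff ℝ (⊤ : ℕ∞) f) (z : ℂ) :
    (-(1 + (Complex.normSq z : ℂ)) ^ 2 * wirtZ (fun w => wirtZbar f w) z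
    - (ν : ℂ) * (1 + (Complex.normSq z : ℂ)) *
        (z * wirtZ f z - (starRingEnd ℂ) z * wirtZbar f z)
    + (ν : ℂ) ^ 2 * (Complex.normSq z : ℂ) * f z)
      = ((((1 + Complex.normSq z) ^ (-ν) : ℝ)) : ℂ) *
          ((-(1 + (Complex.normSq z : ℂ)) ^ 2 *
              wirtZ (fun w => wirtZbar (fun x => P ν x * f x) w) z
            + 2 * (ν : ℂ) * (1 + (Complex.normSq z : ℂ)) * (starRingEnd ℂ) z *
              wirtZbar (fun x => P ν x * f x) z)
            + (ν : ℂ) * (((1 + Complex.normSq z) ^ ν : ℝ) : ℂ) * f z) := by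
  have hfd : ∀ w, DifferentiableAt ℝ f w := fun w => (hf.differentiable (by simp)) w
  -- differentiability of wirtZbar f
  have h1 : ContDiff ℝ (⊤ : ℕ∞) (fderiv ℝ f) := hf.fderiv_right le_rfl
  have h2 : Differentiable ℝ (fun w => fderiv ℝ f w 1) :=
    ((ContinuousLinearMap.apply ℝ ℂ (1:ℂ)).differentiable.comp (h1.differentiable (by simp)))
  have h3 : Differentiable ℝ (fun w => fderiv ℝ f w Complex.I) :=
    ((ContinuousLinearMap.apply ℝ ℂ (Complex.I)).differentiable.comp (h1.differentiable (by simp)))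
  have hBd : Differentiable ℝ (fun w => wirtZbar f w) := by
    have : (fun w => wirtZbar f w)
        = fun w => (1/2 : ℂ) * (fderiv ℝ f w 1 + Complex.I * fderiv ℝ f w Complex.I) := rfl
    rw [this]
    exact (h2.add (h3.const_mul _)).const_mul _
  -- step 1 : first conjugate derivative of P ν * f
  have hstep1 : (fun w => wirtZbar (fun x => P ν x * f x) w)
      = fun w => (ν:ℂ) * (P (ν-1) w * (w * f w)) + P ν w * wirtZbar f w := by
    funext w
    rw [wirtZbar_mul _ _ w (differentiableAt_P ν w) (hfd w), wirtZbar_P]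
    simp only [P]
    push_cast
    ring
  -- differentiability pieces
  have hA : DifferentiableAt ℝ (fun w => P (ν-1) w * (w * f w)) z :=
    (differentiableAt_P (ν-1) z).mul ((differentiableAt_fun_id.mul (hfd z)))
  have hB : DifferentiableAt ℝ (fun w => P ν w * wirtZbar f w) z :=
    (differentiableAt_P ν z).mul (hBd z)
  -- step 2 : wirtZ of step 1 at z
  have hstep2 : wirtZ (fun w => wirtZbar (fun x => P ν x * f x) w) z
      = (ν:ℂ) * (wirtZ (P (ν-1)) z * (z * f z)
          + P (ν-1) z * (f z + z * wirtZ f z))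
        + (wirtZ (P ν) z * wirtZbar f z + P ν z * wirtZ (fun w => wirtZbar f w) z) := by
    rw [hstep1]
    rw [wirtZ_add _ _ z (hA.const_mul _) hB]
    rw [wirtZ_const_mul _ _ z hA]
    rw [wirtZ_mul _ (fun w => w * f w) z (differentiableAt_P (ν-1) z) (differentiableAt_fun_id.mul (hfd z))]
    rw [wirtZ_mul _ _ z differentiableAt_fun_id (hfd z)]
    rw [wirtZ_mul _ _ z (differentiableAt_P ν z) (hBd z)]
    rw [wirtZ_id]
    ring
  rw [hstep2]
  have hz1 := congrFun hstep1 z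
  rw [hz1]
  rw [wirtZ_P, wirtZ_P]
  simp only [P]
  -- now pure algebra
  have hrpos := one_add_normSq_pos z
  have hr1 : ((1 + Complex.normSq z : ℝ) : ℂ) = 1 + z * (starRingEnd ℂ) z := by
    push_cast [← Complex.mul_conj]; ring
  have hrc : (1 + (Complex.normSq z : ℂ)) = 1 + z * (starRingEnd ℂ) z := by
    rw [← Complex.mul_conj]
  have hSpos : (0:ℝ) < (1 + Complex.normSq z) ^ ν := Real.rpow_pos_of_pos hrpos ν
  have hSne : (((1 + Complex.normSq z) ^ ν : ℝ):ℂ) ≠ 0 := by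
    exact_mod_cast ne_of_gt hSpos
  have hrne : ((1:ℂ) + z * (starRingEnd ℂ) z) ≠ 0 := by
    rw [← hr1]; exact_mod_cast ne_of_gt hrpos
  have e1r : (1 + Complex.normSq z) ^ (ν-1) * (1 + Complex.normSq z)
      = (1 + Complex.normSq z) ^ ν := by
    rw [← Real.rpow_add_one (ne_of_gt hrpos)]; ring_nf
  have e2r : (1 + Complex.normSq z) ^ (ν-1-1) * (1 + Complex.normSq z) ^ (2:ℕ)
      = (1 + Complex.normSq z) ^ ν := by
    rw [← Real.rpow_natCast (1 + Complex.normSq z) 2, ← Real.rpow_add hrpos]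
    congr 1; push_cast; ring
  have e3r : (1 + Complex.normSq z) ^ (-ν) * (1 + Complex.normSq z) ^ ν = 1 := by
    rw [← Real.rpow_add hrpos]; norm_num
  have M1 : (((1 + Complex.normSq z) ^ (ν-1) : ℝ):ℂ) * (1 + z * (starRingEnd ℂ) z)
      = (((1 + Complex.normSq z) ^ ν : ℝ):ℂ) := by
    rw [← hr1]; exact_mod_cast e1r
  have M2 : (((1 + Complex.normSq z) ^ (ν-1-1) : ℝ):ℂ) * (1 + z * (starRingEnd ℂ) z) ^ 2
      = (((1 + Complex.normSq z) ^ ν : ℝ):ℂ) := by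
    rw [← hr1]; exact_mod_cast e2r
  have M3 : (((1 + Complex.normSq z) ^ (-ν) : ℝ):ℂ) * (((1 + Complex.normSq z) ^ ν : ℝ):ℂ)
      = 1 := by
    exact_mod_cast e3r
  have hrc2 : ((Complex.normSq z : ℝ) : ℂ) = z * (starRingEnd ℂ) z := (Complex.mul_conj z).symm
  push_cast
  rw [hrc, hrc2]
  linear_combination
      ((ν:ℂ) * ((ν:ℂ)-1) * (z * (starRingEnd ℂ) z) * f z
        * (((1 + Complex.normSq z) ^ (-ν) : ℝ):ℂ)) * M2
    + (((ν:ℂ) * (1 + z * (starRingEnd ℂ) z)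
          * (f z + z * wirtZ f z + (starRingEnd ℂ) z * wirtZbar f z)
        - 2 * (ν:ℂ)^2 * (z * (starRingEnd ℂ) z) * f z)
        * (((1 + Complex.normSq z) ^ (-ν) : ℝ):ℂ)) * M1
    + ((ν:ℂ) * ((ν:ℂ)-1) * (z * (starRingEnd ℂ) z) * f z
        + (ν:ℂ) * (1 + z * (starRingEnd ℂ) z)
            * (f z + z * wirtZ f z + (starRingEnd ℂ) z * wirtZbar f z)
        + (1 + z * (starRingEnd ℂ) z)^2 * wirtZ (fun w => wirtZbar f w) z
        - 2 * (ν:ℂ)^2 * (z * (starRingEnd ℂ) z) * f z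
        - 2 * (ν:ℂ) * (1 + z * (starRingEnd ℂ) z) * (starRingEnd ℂ) z * wirtZbar f z
        - (ν:ℂ) * f z) * M3

theorem statement_17 (ν : ℝ) (hν : 0 < ν) (f : ℂ → ℂ) (hf : ContDiff ℝ (⊤ : ℕ∞) f) (z : ℂ) :
    magLap ν f z
      = ((((1 + Complex.normSq z) ^ (-ν) : ℝ)) : ℂ) *
          (magLapTilde ν (fun w => (((1 + Complex.normSq w) ^ ν : ℝ) : ℂ) * f w) z
            + (ν : ℂ) * (((1 + Complex.normSq z) ^ ν : ℝ) : ℂ) * f z) := by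
  simp only [magLap, magLapTilde]
  exact main ν hν f hf z
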